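/- Let p : ℝ^d → ℝ^m and q : ℝ^m → ℝ^s be polynomial maps with p(0) = 0 and q(0) = 0, where q is given by polynomials q₁,…,q_s. Then for every i = 1,…,s, M_p(φ_m(q_i)) = φ_d(q_i ∘ p). -/

import Mathlib

noncomputable section

open MeasureTheory

/-- Words in the alphabet `{1,…,d}`. -/
abbrev Word (d : ℕ) := List (Fin d)

/-- `T(ℝ^d)`: the real vector space with basis the words in `{1,…,d}`. -/
abbrev Tens (d : ℕ) := Word d →₀ ℝ

namespace SigPaper

variable {d m s : ℕ}

/-- The basis word `w` as an element of `T(ℝ^d)`. -/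
def wordT (w : Word d) : Tens d := Finsupp.single w 1

/-- The shuffle product of two words. -/
def shuffleWord : Word d → Word d → Tens d
  | [], v => Finsupp.single v 1
  | u, [] => Finsupp.single u 1
  | a :: u, b :: v =>
      Finsupp.mapDomain (fun w => a :: w) (shuffleWord u (b :: v)) +
      Finsupp.mapDomain (fun w => b :: w) (shuffleWord (a :: u) v)
  termination_by u v => u.length + v.length
  decreasing_by all_goals simp +arith +decide

/-- The shuffle product `⧢` on `T(ℝ^d)`, the bilinear extension of the shuffle of words. -/
def shuffle (x y : Tens d) : Tens d :=
  x.sum fun u a => y.sum fun v b => (a * b) • shuffleWord u v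

/-- The operator appending the letter `i` at the end of every word (`T_i^+`). -/
def appendLetter (i : Fin d) (x : Tens d) : Tens d :=
  Finsupp.mapDomain (fun w => w ++ [i]) x

/-- The right half-shuffle of two words: `w ≻ (v∘i) = (w ⧢ v)∘i` (zero if the right word
is empty). -/
def halfShuffleWord (u v : Word d) : Tens d :=
  match v.getLast? with
  | none => 0
  | some i => appendLetter i (shuffleWord u v.dropLast)

/-- The right half-shuffle `≻`, extended bilinearly. -/
def halfShuffle (x y : Tens d) : Tens d :=
  x.sum fun u a => y.sum fun v b => (a * b) • halfShuffleWord u v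

/-- The letter-appending operator `T_i^+`. -/
def Tplus (i : Fin d) : Tens d → Tens d := appendLetter i

/-- `T_i^-` on a word: removes the last letter if it equals `i`, otherwise `0`. -/
def TminusWord (i : Fin d) (w : Word d) : Tens d :=
  match w.getLast? with
  | none => 0
  | some j => if j = i then Finsupp.single w.dropLast 1 else 0

/-- The letter-removing operator `T_i^-`. -/
def Tminus (i : Fin d) (x : Tens d) : Tens d := x.sum fun w a => a • TminusWord i w

/-- The single-letter word `i` in `T(ℝ^d)`. -/
def letterT (i : Fin d) : Tens d := Finsupp.single [i] 1

/-- Shuffle powers `x^{⧢ n}`. -/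
def shufflePow (x : Tens d) : ℕ → Tens d
  | 0 => Finsupp.single [] 1
  | n + 1 => shuffle (shufflePow x n) x

/-- Shuffle product of a list of elements. -/
def shuffleList : List (Tens d) → Tens d
  | [] => Finsupp.single [] 1
  | x :: xs => shuffle x (shuffleList xs)

/-- Image of the monomial `x^t` under `φ_d`: the shuffle product of its letters. -/
def phiMon (t : Fin d →₀ ℕ) : Tens d :=
  shuffleList ((List.finRange d).map fun i => shufflePow (letterT i) (t i))

/-- The embedding `φ_d : ℝ[x₁,…,x_d] → (T(ℝ^d), ⧢)` sending the monomial
`x_{i₁}⋯x_{i_l}` to `i₁ ⧢ ⋯ ⧢ i_l`. -/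
def phi (f : MvPolynomial (Fin d) ℝ) : Tens d :=
  f.support.sum fun t => f.coeff t • phiMon t

/-- A polynomial map `p : ℝ^d → ℝ^m`, given by `m` polynomials in `d` variables. -/
abbrev PolyMap (d m : ℕ) := Fin m → MvPolynomial (Fin d) ℝ

/-- `k_p^{ij} = φ_d(∂p_i/∂x_j) ∈ T(ℝ^d)`. -/
def kP (p : PolyMap d m) (i : Fin m) (j : Fin d) : Tens d :=
  phi (MvPolynomial.pderiv j (p i))

/-- Auxiliary: `M_p` on reversed words, so that `M_p(e) = e` and
`M_p(w∘i) = Σ_j (M_p(w) ⧢ k_p^{ij})∘j`. -/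
def MpRev (p : PolyMap d m) : List (Fin m) → Tens d
  | [] => Finsupp.single [] 1
  | i :: w => ∑ j : Fin d, appendLetter j (shuffle (MpRev p w) (kP p i j))

/-- `M_p` on a word. -/
def MpWord (p : PolyMap d m) (w : Word m) : Tens d := MpRev p w.reverse

/-- The linear map `M_p : T(ℝ^m) → T(ℝ^d)`. -/
def Mp (p : PolyMap d m) (x : Tens m) : Tens d := x.sum fun w a => a • MpWord p w

/-- `X : [0,L] → ℝ^d` is piecewise continuously differentiable: there is a partition
`0 = t₀ ≤ t₁ ≤ ⋯ ≤ t_n = L` such that `X` is `C¹` on each subinterval. -/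
def PiecewiseC1 (X : ℝ → Fin d → ℝ) (L : ℝ) : Prop :=
  ∃ (n : ℕ) (t : Fin (n + 1) → ℝ), Monotone t ∧ t 0 = 0 ∧ t (Fin.last n) = L ∧
    ∀ k : Fin n, ContDiffOn ℝ 1 X (Set.Icc (t k.castSucc) (t k.succ))

/-- Iterated-integral signature coefficients, on reversed words:
`⟨σ(X|_{[0,t]}), w∘i⟩ = ∫_0^t ⟨σ(X|_{[0,r]}), w⟩ Ẋ^i_r dr`. -/
def sigRev (X : ℝ → Fin d → ℝ) : List (Fin d) → ℝ → ℝ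
  | [], _ => 1
  | i :: w, t => ∫ r in (0:ℝ)..t, sigRev X w r * deriv (fun u => X u i) r

/-- `⟨σ(X|_{[0,L]}), w⟩`, the signature coefficient of the word `w`. -/
def sigWord (X : ℝ → Fin d → ℝ) (L : ℝ) (w : Word d) : ℝ := sigRev X w.reverse L

/-- The pairing `⟨σ(X|_{[0,L]}), x⟩` for `x ∈ T(ℝ^d)`. -/
def sigT (X : ℝ → Fin d → ℝ) (L : ℝ) (x : Tens d) : ℝ :=
  x.sum fun w a => a * sigWord X L w

/-- The transformed path `p(X) : t ↦ p(X(t))`. -/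
def pPath (p : PolyMap d m) (X : ℝ → Fin d → ℝ) : ℝ → Fin m → ℝ :=
  fun t i => MvPolynomial.eval (X t) (p i)

/-- The translated polynomial map `p̃(y) = p(y + x₀) − p(x₀)`, satisfying `p̃(0) = 0`. -/
def ptilde (p : PolyMap d m) (x0 : Fin d → ℝ) : PolyMap d m := fun i =>
  MvPolynomial.aeval (fun j => MvPolynomial.X j + MvPolynomial.C (x0 j)) (p i) -
    MvPolynomial.C (MvPolynomial.eval x0 (p i))

/-- The pairing `⟨exp_∘(L·𝟙), x⟩` for `x ∈ T(ℝ¹)`: the coefficient of the word of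
length `n` in `exp_∘(L·𝟙)` is `Lⁿ/n!`. -/
def expPair (L : ℝ) (x : Tens 1) : ℝ :=
  x.sum fun w a => a * (L ^ w.length / (w.length.factorial : ℝ))

/-- The pairing `⟨σ(X) ∘ σ(Y), x⟩` of the concatenation product of two signatures with
`x ∈ T(ℝ^d)`: on a word `w` it is `Σ_{u∘v = w} ⟨σ(X), u⟩·⟨σ(Y), v⟩`. -/
def concatPair (X Y : ℝ → Fin d → ℝ) (L : ℝ) (x : Tens d) : ℝ :=
  x.sum fun w a =>
    a * ∑ k ∈ Finset.range (w.length + 1), sigWord X L (w.take k) * sigWord Y L (w.drop k)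
/-!
`M_p` is a morphism of shuffle algebras. Indeed `M_p(w∘i) = T_{k_p^i}(M_p w)` for the operators
`T_k x = Σⱼ (x ⧢ kⱼ)∘j` (`shuffleAppend k`), and by associativity and commutativity of `⧢` these
satisfy the last-letter recursion `T_k x ⧢ T_{k'} y = T_k (x ⧢ T_{k'} y) + T_{k'} (T_k x ⧢ y)` of
the shuffle of words. Expanding `φ_d(f) = f(0)·e + Σⱼ φ_d(∂f/∂xⱼ)∘j` gives `M_p(i) = φ_d(pᵢ)` when
`pᵢ(0) = 0`. Hence `M_p ∘ φ_m` and `φ_d ∘ (· ∘ p)` are algebra morphisms `ℝ[x₁,…,x_m] → (T(ℝ^d), ⧢)`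
agreeing on the generators `xᵢ`.
-/

open MvPolynomial

lemma linear_ext_wordT {M : Type*} [AddCommMonoid M] [Module ℝ M] {f g : Tens d →ₗ[ℝ] M}
    (h : ∀ w, f (wordT w) = g (wordT w)) : f = g :=
  Finsupp.basisSingleOne.ext h

lemma bilinear_ext_wordT {M : Type*} [AddCommMonoid M] [Module ℝ M]
    {f g : Tens d →ₗ[ℝ] Tens m →ₗ[ℝ] M}
    (h : ∀ u v, f (wordT u) (wordT v) = g (wordT u) (wordT v)) : f = g :=
  LinearMap.ext_basis Finsupp.basisSingleOne Finsupp.basisSingleOne h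

def prependLetter (a : Fin d) : Tens d →ₗ[ℝ] Tens d := Finsupp.lmapDomain ℝ ℝ (a :: ·)

lemma prependLetter_wordT (a : Fin d) (w : Word d) :
    prependLetter a (wordT w) = wordT (a :: w) :=
  Finsupp.mapDomain_single

def appendLetterₗ (i : Fin d) : Tens d →ₗ[ℝ] Tens d := Finsupp.lmapDomain ℝ ℝ (· ++ [i])

@[simp] lemma appendLetterₗ_apply (i : Fin d) (x : Tens d) :
    appendLetterₗ i x = appendLetter i x := rfl

lemma appendLetter_wordT (i : Fin d) (w : Word d) :
    appendLetter i (wordT w) = wordT (w ++ [i]) :=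
  Finsupp.mapDomain_single

lemma letterT_eq_appendLetter (i : Fin d) : letterT i = appendLetter i (wordT []) :=
  (appendLetter_wordT i []).symm

lemma appendLetter_zero (i : Fin d) : appendLetter i (0 : Tens d) = 0 :=
  map_zero (appendLetterₗ i)

lemma appendLetter_add (i : Fin d) (x y : Tens d) :
    appendLetter i (x + y) = appendLetter i x + appendLetter i y :=
  map_add (appendLetterₗ i) x y

lemma appendLetter_smul (i : Fin d) (c : ℝ) (x : Tens d) :
    appendLetter i (c • x) = c • appendLetter i x :=
  map_smul (appendLetterₗ i) c x

lemma appendLetter_sum {ι : Type*} (i : Fin d) (s : Finset ι) (x : ι → Tens d) :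
    appendLetter i (∑ j ∈ s, x j) = ∑ j ∈ s, appendLetter i (x j) :=
  map_sum (appendLetterₗ i) x s

lemma prependLetter_appendLetter (a i : Fin d) (x : Tens d) :
    prependLetter a (appendLetter i x) = appendLetter i (prependLetter a x) := by
  simp only [prependLetter, appendLetter, Finsupp.lmapDomain_apply, ← Finsupp.mapDomain_comp]
  rfl

lemma shuffleWord_nil_left (v : Word d) : shuffleWord [] v = wordT v := by
  cases v <;> rw [shuffleWord, wordT]

lemma shuffleWord_nil_right (u : Word d) : shuffleWord u [] = wordT u := by
  cases u <;> simp [shuffleWord, wordT]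

lemma shuffleWord_cons_cons (a b : Fin d) (u v : Word d) :
    shuffleWord (a :: u) (b :: v) =
      prependLetter a (shuffleWord u (b :: v)) + prependLetter b (shuffleWord (a :: u) v) := by
  rw [shuffleWord]; rfl

theorem shuffleWord_concat_concat (a b : Fin d) : ∀ u v : Word d,
    shuffleWord (u ++ [a]) (v ++ [b]) =
      appendLetter a (shuffleWord u (v ++ [b])) + appendLetter b (shuffleWord (u ++ [a]) v)
  | [], [] => by
    simp [shuffleWord_cons_cons, shuffleWord_nil_left, shuffleWord_nil_right, prependLetter_wordT,
      appendLetter_wordT, add_comm]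
  | [], c :: v => by
    have ih := shuffleWord_concat_concat a b [] v
    simp only [List.nil_append, List.cons_append] at ih ⊢
    rw [shuffleWord_cons_cons, ih]
    simp only [shuffleWord_cons_cons, shuffleWord_nil_left, map_add, appendLetter_add,
      prependLetter_appendLetter, prependLetter_wordT, appendLetter_wordT, List.cons_append]
    abel
  | c :: u, [] => by
    have ih := shuffleWord_concat_concat a b u []
    simp only [List.nil_append, List.cons_append] at ih ⊢
    rw [shuffleWord_cons_cons, ih]
    simp only [shuffleWord_cons_cons, shuffleWord_nil_right, map_add, appendLetter_add,
      prependLetter_appendLetter, prependLetter_wordT, appendLetter_wordT, List.cons_append]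
    abel
  | c :: u, e :: v => by
    have ih₁ := shuffleWord_concat_concat a b u (e :: v)
    have ih₂ := shuffleWord_concat_concat a b (c :: u) v
    simp only [List.cons_append] at ih₁ ih₂ ⊢
    rw [shuffleWord_cons_cons, ih₁, ih₂, shuffleWord_cons_cons c e u (v ++ [b]),
      shuffleWord_cons_cons c e (u ++ [a]) v]
    simp only [map_add, appendLetter_add, prependLetter_appendLetter]
    abel
termination_by u v => u.length + v.length

theorem shuffleWord_comm : ∀ u v : Word d, shuffleWord u v = shuffleWord v u
  | [], v => by rw [shuffleWord_nil_left, shuffleWord_nil_right]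
  | a :: u, [] => by rw [shuffleWord_nil_left, shuffleWord_nil_right]
  | a :: u, b :: v => by
    rw [shuffleWord_cons_cons, shuffleWord_cons_cons, shuffleWord_comm u, shuffleWord_comm _ v,
      add_comm]
termination_by u v => u.length + v.length

def shuffleₗ : Tens d →ₗ[ℝ] Tens d →ₗ[ℝ] Tens d :=
  Finsupp.linearCombination ℝ fun u => Finsupp.linearCombination ℝ (shuffleWord u)

@[simp] lemma shuffleₗ_apply (x y : Tens d) : shuffleₗ x y = shuffle x y := by
  simp [shuffleₗ, shuffle, Finsupp.linearCombination_apply, Finsupp.sum, Finset.smul_sum,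
    LinearMap.sum_apply, smul_smul]

lemma shuffle_wordT (u v : Word d) : shuffle (wordT u) (wordT v) = shuffleWord u v := by
  simp [← shuffleₗ_apply, shuffleₗ, wordT]

lemma shuffle_add_left (x x' y : Tens d) : shuffle (x + x') y = shuffle x y + shuffle x' y := by
  simp [← shuffleₗ_apply]

lemma shuffle_add_right (x y y' : Tens d) : shuffle x (y + y') = shuffle x y + shuffle x y' := by
  simp [← shuffleₗ_apply]

lemma shuffle_smul_left (c : ℝ) (x y : Tens d) : shuffle (c • x) y = c • shuffle x y := by
  simp [← shuffleₗ_apply]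

lemma shuffle_smul_right (c : ℝ) (x y : Tens d) : shuffle x (c • y) = c • shuffle x y := by
  simp [← shuffleₗ_apply]

lemma shuffle_sum_left {ι : Type*} (s : Finset ι) (x : ι → Tens d) (y : Tens d) :
    shuffle (∑ i ∈ s, x i) y = ∑ i ∈ s, shuffle (x i) y := by
  simp [← shuffleₗ_apply]

lemma shuffle_sum_right {ι : Type*} (s : Finset ι) (x : Tens d) (y : ι → Tens d) :
    shuffle x (∑ i ∈ s, y i) = ∑ i ∈ s, shuffle x (y i) := by
  simp [← shuffleₗ_apply]

lemma shuffle_wordT_nil_left (y : Tens d) : shuffle (wordT []) y = y := by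
  have : shuffleₗ (wordT []) = (LinearMap.id : Tens d →ₗ[ℝ] Tens d) :=
    linear_ext_wordT fun v => by simp [shuffle_wordT, shuffleWord_nil_left]
  simpa using LinearMap.congr_fun this y

lemma shuffle_wordT_nil_right (x : Tens d) : shuffle x (wordT []) = x := by
  have : shuffleₗ.flip (wordT []) = (LinearMap.id : Tens d →ₗ[ℝ] Tens d) :=
    linear_ext_wordT fun u => by simp [shuffle_wordT, shuffleWord_nil_right]
  simpa using LinearMap.congr_fun this x

lemma prependLetter_shuffle_prependLetter (a b : Fin d) (x y : Tens d) :
    shuffle (prependLetter a x) (prependLetter b y) =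
      prependLetter a (shuffle x (prependLetter b y)) +
        prependLetter b (shuffle (prependLetter a x) y) := by
  have := bilinear_ext_wordT (f := shuffleₗ.compl₁₂ (prependLetter a) (prependLetter b))
    (g := (shuffleₗ.compl₂ (prependLetter b)).compr₂ (prependLetter a) +
      (shuffleₗ ∘ₗ prependLetter a).compr₂ (prependLetter b)) fun u v => by
    simp [prependLetter_wordT, shuffle_wordT, shuffleWord_cons_cons]
  simpa using LinearMap.congr_fun₂ this x y

lemma appendLetter_shuffle_appendLetter (a b : Fin d) (x y : Tens d) :
    shuffle (appendLetter a x) (appendLetter b y) =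
      appendLetter a (shuffle x (appendLetter b y)) +
        appendLetter b (shuffle (appendLetter a x) y) := by
  have := bilinear_ext_wordT (f := shuffleₗ.compl₁₂ (appendLetterₗ a) (appendLetterₗ b))
    (g := (shuffleₗ.compl₂ (appendLetterₗ b)).compr₂ (appendLetterₗ a) +
      (shuffleₗ ∘ₗ appendLetterₗ a).compr₂ (appendLetterₗ b)) fun u v => by
    simp [appendLetter_wordT, shuffle_wordT, shuffleWord_concat_concat]
  simpa using LinearMap.congr_fun₂ this x y

lemma shuffle_comm (x y : Tens d) : shuffle x y = shuffle y x := by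
  have := bilinear_ext_wordT (f := (shuffleₗ : Tens d →ₗ[ℝ] _)) (g := shuffleₗ.flip) fun u v => by
    simp [shuffle_wordT, shuffleWord_comm]
  simpa using LinearMap.congr_fun₂ this x y

theorem shuffleWord_assoc : ∀ u v w : Word d,
    shuffle (shuffleWord u v) (wordT w) = shuffle (wordT u) (shuffleWord v w)
  | [], v, w => by rw [shuffleWord_nil_left, shuffle_wordT, shuffle_wordT_nil_left]
  | u, [], w => by rw [shuffleWord_nil_left, shuffleWord_nil_right]
  | a :: u, b :: v, [] => by rw [shuffleWord_nil_right, shuffle_wordT_nil_right, shuffle_wordT]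
  | a :: u, b :: v, c :: w => by
    have ih₁ := shuffleWord_assoc u (b :: v) (c :: w)
    have ih₂ := shuffleWord_assoc (a :: u) v (c :: w)
    have ih₃ := shuffleWord_assoc (a :: u) (b :: v) w
    simp only [← prependLetter_wordT] at ih₁ ih₂ ih₃ ⊢
    rw [shuffleWord_cons_cons, shuffleWord_cons_cons, shuffle_add_left, shuffle_add_right,
      prependLetter_shuffle_prependLetter, prependLetter_shuffle_prependLetter,
      prependLetter_shuffle_prependLetter, prependLetter_shuffle_prependLetter,
      ih₁, ih₂, ← ih₃, shuffleWord_cons_cons a b u v, shuffleWord_cons_cons b c v w,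
      shuffle_add_left, shuffle_add_right, map_add, map_add]
    abel
termination_by u v w => u.length + v.length + w.length

lemma shuffle_assoc (x y z : Tens d) : shuffle (shuffle x y) z = shuffle x (shuffle y z) := by
  have on_words (u v : Word d) :
      shuffleₗ (shuffleWord u v) = shuffleₗ (wordT u) ∘ₗ shuffleₗ (wordT v) :=
    linear_ext_wordT fun w => by simpa [shuffle_wordT] using shuffleWord_assoc u v w
  have := bilinear_ext_wordT (f := shuffleₗ.compr₂ (shuffleₗ.flip z))
    (g := shuffleₗ.compl₂ (shuffleₗ.flip z)) fun u v => by
      simpa [shuffle_wordT] using LinearMap.congr_fun (on_words u v) z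
  simpa using LinearMap.congr_fun₂ this x y

lemma shuffle_right_comm (x y z : Tens d) : shuffle (shuffle x y) z = shuffle (shuffle x z) y := by
  rw [shuffle_assoc, shuffle_comm y, ← shuffle_assoc]

def shuffleAppend (k : Fin d → Tens d) (x : Tens d) : Tens d :=
  ∑ j, appendLetter j (shuffle x (k j))

lemma shuffleAppend_wordT_nil (k : Fin d → Tens d) :
    shuffleAppend k (wordT []) = ∑ j, appendLetter j (k j) := by
  simp only [shuffleAppend, shuffle_wordT_nil_left]

lemma shuffleAppend_shuffle_shuffleAppend (k k' : Fin d → Tens d) (x y : Tens d) :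
    shuffle (shuffleAppend k x) (shuffleAppend k' y) =
      shuffleAppend k (shuffle x (shuffleAppend k' y)) +
        shuffleAppend k' (shuffle (shuffleAppend k x) y) := by
  set X := shuffleAppend k x
  set Y := shuffleAppend k' y
  calc shuffle X Y
      = ∑ j, ∑ l, (appendLetter j (shuffle (shuffle x (k j)) (appendLetter l (shuffle y (k' l)))) +
          appendLetter l (shuffle (appendLetter j (shuffle x (k j))) (shuffle y (k' l)))) := by
        simp only [X, Y, shuffleAppend, shuffle_sum_left, shuffle_sum_right,
          appendLetter_shuffle_appendLetter]
        exact Finset.sum_comm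
    _ = ∑ j, appendLetter j (shuffle (shuffle x (k j)) Y) +
          ∑ l, appendLetter l (shuffle X (shuffle y (k' l))) := by
        simp only [Finset.sum_add_distrib, X, Y, shuffleAppend, appendLetter_sum, shuffle_sum_left,
          shuffle_sum_right]
        rw [Finset.sum_comm (f := fun j l => appendLetter l _)]
    _ = _ := by simp only [shuffleAppend, shuffle_right_comm x, shuffle_assoc X]

section Phi

def phiₗ : MvPolynomial (Fin d) ℝ →ₗ[ℝ] Tens d :=
  Finsupp.linearCombination ℝ phiMon ∘ₗ (AddMonoidAlgebra.coeffLinearEquiv ℝ).toLinearMap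

@[simp] lemma phiₗ_apply (f : MvPolynomial (Fin d) ℝ) : phiₗ f = phi f := rfl

variable (f g : MvPolynomial (Fin d) ℝ)

lemma phi_zero : phi (0 : MvPolynomial (Fin d) ℝ) = 0 := map_zero phiₗ

lemma phi_add : phi (f + g) = phi f + phi g := map_add phiₗ f g

lemma phi_smul (c : ℝ) : phi (c • f) = c • phi f := map_smul phiₗ c f

lemma phi_monomial (t : Fin d →₀ ℕ) (c : ℝ) : phi (monomial t c) = c • phiMon t := by
  rw [← phiₗ_apply]
  exact Finsupp.linearCombination_single ℝ c t

lemma shuffleList_eq_wordT_nil (l : List (Tens d)) (h : ∀ x ∈ l, x = wordT []) :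
    shuffleList l = wordT [] := by
  induction l with
  | nil => rfl
  | cons x l ih =>
    rw [shuffleList, h x List.mem_cons_self, ih fun y hy => h y (List.mem_cons_of_mem x hy),
      shuffle_wordT_nil_left]

lemma phi_C (c : ℝ) : phi (C c : MvPolynomial (Fin d) ℝ) = c • wordT [] := by
  rw [← monomial_zero', phi_monomial, phiMon,
    shuffleList_eq_wordT_nil _ (by simp [shufflePow, wordT])]

lemma shuffleList_map_update {ι : Type*} [DecidableEq ι] (x : ι → Tens d) (y : Tens d) {i : ι} :
    ∀ {l : List ι}, l.Nodup → i ∈ l →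
      shuffleList (l.map (Function.update x i (shuffle (x i) y))) =
        shuffle (shuffleList (l.map x)) y
  | a :: l, hl, hi => by
    obtain ⟨ha, hl⟩ := List.nodup_cons.mp hl
    rw [List.map_cons, List.map_cons, shuffleList, shuffleList]
    by_cases hai : a = i
    · subst hai
      rw [Function.update_self, List.map_congr_left fun b hb =>
        Function.update_of_ne (ne_of_mem_of_not_mem hb ha) _ x, shuffle_right_comm]
    · rw [Function.update_of_ne hai, shuffleList_map_update x y hl
        ((List.mem_cons.mp hi).resolve_left (Ne.symm hai)), shuffle_assoc]

lemma phiMon_add_single (t : Fin d →₀ ℕ) (i : Fin d) :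
    phiMon (t + Finsupp.single i 1) = shuffle (phiMon t) (letterT i) := by
  classical
  have : (fun j => shufflePow (letterT j) ((t + Finsupp.single i 1 : Fin d →₀ ℕ) j)) =
      Function.update (fun j => shufflePow (letterT j) (t j)) i
        (shuffle (shufflePow (letterT i) (t i)) (letterT i)) := by
    funext j
    rcases eq_or_ne j i with rfl | hj
    · simp [shufflePow]
    · simp [hj]
  rw [phiMon, phiMon, this,
    shuffleList_map_update _ _ (List.nodup_finRange d) (List.mem_finRange i)]

lemma phi_mul_X (i : Fin d) : phi (f * X i) = shuffle (phi f) (letterT i) := by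
  induction f using MvPolynomial.induction_on' with
  | monomial t c =>
    rw [X, monomial_mul, mul_one, phi_monomial, phi_monomial, phiMon_add_single,
      shuffle_smul_left]
  | add f g hf hg => rw [add_mul, phi_add, phi_add, hf, hg, shuffle_add_left]

lemma phi_mul : phi (f * g) = shuffle (phi f) (phi g) := by
  induction g using MvPolynomial.induction_on with
  | C c =>
    rw [phi_C, shuffle_smul_right, shuffle_wordT_nil_right, mul_comm, ← smul_eq_C_mul, phi_smul]
  | add g g' hg hg' => rw [mul_add, phi_add, phi_add, hg, hg', shuffle_add_right]
  | mul_X g i hg => rw [← mul_assoc, phi_mul_X, phi_mul_X, hg, shuffle_assoc]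

lemma phi_pderiv_mul_X (i j : Fin d) :
    phi (pderiv j (f * X i)) =
      shuffle (phi (pderiv j f)) (letterT i) + (Pi.single i (phi f) : Fin d → Tens d) j := by
  rw [pderiv_mul, phi_add, phi_mul_X, pderiv_X]
  rcases eq_or_ne j i with rfl | hji
  · simp
  · simp [hji, phi_zero]

theorem phi_eq_constantCoeff_add_sum_appendLetter :
    phi f = constantCoeff f • wordT [] + ∑ j, appendLetter j (phi (pderiv j f)) := by
  induction f using MvPolynomial.induction_on with
  | C c => simp [phi_C, phi_zero, appendLetter_zero]
  | add f g hf hg =>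
    simp only [phi_add, map_add, appendLetter_add, Finset.sum_add_distrib, add_smul]
    rw [hf, hg]
    abel
  | mul_X f i hf =>
    have sum_single : ∑ j, appendLetter j ((Pi.single i (phi f) : Fin d → Tens d) j) =
        appendLetter i (phi f) :=
      (Finset.sum_eq_single i (fun j _ hj => by rw [Pi.single_eq_of_ne hj, appendLetter_zero])
        (absurd (Finset.mem_univ i))).trans (by rw [Pi.single_eq_same])
    simp only [phi_pderiv_mul_X, appendLetter_add, Finset.sum_add_distrib, sum_single, map_mul,
      constantCoeff_X, mul_zero, zero_smul, zero_add, phi_mul_X, letterT_eq_appendLetter]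
    conv_lhs => rw [hf]
    conv_rhs => rw [hf]
    simp only [shuffle_add_left, shuffle_smul_left, shuffle_wordT_nil_left, shuffle_sum_left,
      appendLetter_shuffle_appendLetter, shuffle_wordT_nil_right, Finset.sum_add_distrib,
      appendLetter_add, appendLetter_smul, appendLetter_sum]
    abel

end Phi

section Mp

variable {p : PolyMap d m}

def Mpₗ (p : PolyMap d m) : Tens m →ₗ[ℝ] Tens d := Finsupp.linearCombination ℝ (MpWord p)

@[simp] lemma Mpₗ_apply (x : Tens m) : Mpₗ p x = Mp p x := rfl

lemma Mp_add (x y : Tens m) : Mp p (x + y) = Mp p x + Mp p y := map_add (Mpₗ p) x y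

lemma Mp_smul (c : ℝ) (x : Tens m) : Mp p (c • x) = c • Mp p x := map_smul (Mpₗ p) c x

lemma Mp_wordT (w : Word m) : Mp p (wordT w) = MpWord p w := by
  simp [← Mpₗ_apply, Mpₗ, wordT]

lemma MpWord_nil : MpWord p [] = wordT [] := rfl

lemma MpWord_concat (w : Word m) (i : Fin m) :
    MpWord p (w ++ [i]) = shuffleAppend (kP p i) (MpWord p w) := by
  simp [MpWord, MpRev, shuffleAppend]

lemma Mp_appendLetter (i : Fin m) (x : Tens m) :
    Mp p (appendLetter i x) = shuffleAppend (kP p i) (Mp p x) := by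
  have := linear_ext_wordT (f := Mpₗ p ∘ₗ appendLetterₗ i)
    (g := (∑ j, appendLetterₗ j ∘ₗ shuffleₗ.flip (kP p i j)) ∘ₗ Mpₗ p) fun w => by
      simp [appendLetter_wordT, Mp_wordT, MpWord_concat, shuffleAppend]
  simpa [shuffleAppend] using LinearMap.congr_fun this x

theorem Mp_shuffleWord (u v : Word m) :
    Mp p (shuffleWord u v) = shuffle (MpWord p u) (MpWord p v) := by
  induction u using List.reverseRecOn generalizing v with
  | nil => rw [shuffleWord_nil_left, Mp_wordT, MpWord_nil, shuffle_wordT_nil_left]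
  | append_singleton u a ihu =>
    induction v using List.reverseRecOn with
    | nil => rw [shuffleWord_nil_right, Mp_wordT, MpWord_nil, shuffle_wordT_nil_right]
    | append_singleton v b ihv =>
      rw [shuffleWord_concat_concat, Mp_add, Mp_appendLetter, Mp_appendLetter, ihu, ihv,
        MpWord_concat, MpWord_concat, shuffleAppend_shuffle_shuffleAppend]

theorem Mp_shuffle (x y : Tens m) : Mp p (shuffle x y) = shuffle (Mp p x) (Mp p y) := by
  have := bilinear_ext_wordT (f := shuffleₗ.compr₂ (Mpₗ p))
    (g := shuffleₗ.compl₁₂ (Mpₗ p) (Mpₗ p)) fun u v => by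
      simp [shuffle_wordT, Mp_shuffleWord, Mp_wordT]
  simpa using LinearMap.congr_fun₂ this x y

lemma Mp_letterT (i : Fin m) (hpi : constantCoeff (p i) = 0) : Mp p (letterT i) = phi (p i) := by
  rw [letterT_eq_appendLetter, Mp_appendLetter, Mp_wordT, MpWord_nil, shuffleAppend_wordT_nil,
    phi_eq_constantCoeff_add_sum_appendLetter (p i), hpi, zero_smul, zero_add]
  rfl

theorem Mp_phi (hp : ∀ i, constantCoeff (p i) = 0) (f : MvPolynomial (Fin m) ℝ) :
    Mp p (phi f) = phi (bind₁ p f) := by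
  induction f using MvPolynomial.induction_on with
  | C c => rw [phi_C, Mp_smul, Mp_wordT, bind₁_C_right, phi_C, MpWord_nil]
  | add f g hf hg => rw [phi_add, Mp_add, hf, hg, map_add, phi_add]
  | mul_X f i hf =>
    rw [phi_mul_X, Mp_shuffle, hf, Mp_letterT i (hp i), map_mul, bind₁_X_right, phi_mul]

end Mp

theorem Mp_phi_comp_general (d m s : ℕ) (p : PolyMap d m) (q : PolyMap m s)
    (hp : ∀ i, MvPolynomial.eval (0 : Fin d → ℝ) (p i) = 0) :
    ∀ i : Fin s, Mp p (phi (q i)) = phi (MvPolynomial.bind₁ p (q i)) :=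
  fun i => Mp_phi (fun j => by rw [← eval_zero]; exact hp j) (q i)

/-- For polynomial maps `p : ℝ^d → ℝ^m` and `q : ℝ^m → ℝ^s` with
`p(0) = 0` and `q(0) = 0`, one has `M_p(φ_m(q_i)) = φ_d(q_i ∘ p)` for every `i`. -/
theorem Mp_phi_comp (d m s : ℕ) (p : PolyMap d m) (q : PolyMap m s)
    (hp : ∀ i, MvPolynomial.eval (0 : Fin d → ℝ) (p i) = 0)
    (hq : ∀ i, MvPolynomial.eval (0 : Fin m → ℝ) (q i) = 0) :
    ∀ i : Fin s, Mp p (phi (q i)) = phi (MvPolynomial.bind₁ p (q i)) :=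
  Mp_phi_comp_general d m s p q hp

end SigPaper
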